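/- arXiv:2504.00571 — 5 statements merged into one kernel-verified Lean document; each statement's English description precedes it below -/
import Mathlib

section
/- For a finite cyclic group C_n of order n and an element x of order d dividing n, the number of vertices adjacent to x in the power graph of C_n equals d + (sum over divisors e of n/d of φ(n/e)) − φ(d) − 1, where φ is Euler's totient function. -/
/-- The power graph of a group: distinct vertices are adjacent iff
one is a power of the other. -/
def powerGraph (G : Type*) [Group G] : SimpleGraph G where
  Adj x y := x ≠ y ∧ (x ∈ Subgroup.zpowers y ∨ y ∈ Subgroup.zpowers x)
  symm := ⟨fun x y ⟨h1, h2⟩ => ⟨h1.symm, h2.symm⟩⟩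
  loopless := ⟨fun x ⟨h, _⟩ => h rfl⟩

/-- `v` lies in a connected component containing a cycle. -/
def InCyclicComp {V : Type*} (Γ : SimpleGraph V) (v : V) : Prop :=
  ∃ w, Γ.Reachable v w ∧ ∃ c : Γ.Walk w w, c.IsCycle

/-- `S` is a cyclic vertex cutset: `Γ - S` is disconnected with at least two
components containing cycles. -/
def IsCyclicCutset {V : Type*} (Γ : SimpleGraph V) (S : Set V) : Prop :=
  ∃ u v : ↥(Sᶜ), ¬ (Γ.induce Sᶜ).Reachable u v ∧
    InCyclicComp (Γ.induce Sᶜ) u ∧ InCyclicComp (Γ.induce Sᶜ) v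

/-- A graph is cyclically separable if it has a cyclic vertex cutset. -/
def CyclicallySeparable {V : Type*} (Γ : SimpleGraph V) : Prop :=
  ∃ S : Set V, IsCyclicCutset Γ S

/-- Vertex connectivity: the least number of vertices whose deletion
disconnects the graph or reduces it to at most one vertex. -/
noncomputable def vertexConn {V : Type*} (Γ : SimpleGraph V) : ℕ :=
  sInf {k | ∃ S : Set V, S.ncard = k ∧
    (¬ (Γ.induce Sᶜ).Connected ∨ Sᶜ.Subsingleton)}

/-- Cyclic vertex connectivity: the least cardinality of a cyclic vertex
cutset, `∞` if there is none. -/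
noncomputable def cyclicVertexConn {V : Type*} (Γ : SimpleGraph V) : ℕ∞ :=
  sInf {k : ℕ∞ | ∃ S : Set V, IsCyclicCutset Γ S ∧ k = (S.ncard : ℕ∞)}

/-- `genClass x` is `[x]`, the set of generators of `⟨x⟩`. -/
def genClass {G : Type*} [Group G] (x : G) : Set G :=
  {y | Subgroup.zpowers y = Subgroup.zpowers x}

/-- Neighbourhood of a set of vertices. -/
def setNbhd {V : Type*} (Γ : SimpleGraph V) (A : Set V) : Set V :=
  {v | v ∉ A ∧ ∃ a ∈ A, Γ.Adj v a}

/-! The neighbours of `x` (of order `d`) in a finite cyclic group of order `n` are the `z ≠ x` with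
`ord z ∣ d` or `d ∣ ord z`, because `⟨x⟩` is the unique subgroup of order `d`. There are `d`
elements of the first kind, `∑_{d ∣ m ∣ n} φ(m)` of the second and `φ(d)` of both;
inclusion–exclusion and the substitution `m = n / e` give the formula. -/

open Finset Subgroup

theorem Nat.sum_divisors_filter_dvd_eq_sum_divisors_div {M : Type*} [AddCommMonoid M]
    {n d : ℕ} (hn : n ≠ 0) (hdn : d ∣ n) (f : ℕ → M) :
    ∑ m ∈ n.divisors with d ∣ m, f m = ∑ e ∈ (n / d).divisors, f (n / e) := by
  have hdual : ∀ e ∈ n.divisors, d ∣ n / e ↔ e ∣ n / d := fun e he => by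
    have he : e ∣ n := Nat.dvd_of_mem_divisors he
    rw [Nat.dvd_div_iff_mul_dvd he, Nat.dvd_div_iff_mul_dvd hdn, mul_comm]
  calc ∑ m ∈ n.divisors with d ∣ m, f m
      = ∑ e ∈ n.divisors with d ∣ n / e, f (n / e) := by
        rw [sum_filter, sum_filter, ← Nat.sum_div_divisors n (fun m => if d ∣ m then f m else 0)]
    _ = ∑ e ∈ (n / d).divisors, f (n / e) := by
        rw [← Nat.divisors_filter_dvd_of_dvd hn (Nat.div_dvd_of_dvd hdn), filter_congr hdual]

namespace IsCyclic

variable {G : Type*} [Group G] [Fintype G] [IsCyclic G]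

theorem mem_zpowers_iff_orderOf_dvd {x z : G} : x ∈ zpowers z ↔ orderOf x ∣ orderOf z := by
  classical
  refine ⟨orderOf_dvd_of_mem_zpowers, fun h => ?_⟩
  have hsub : (zpowers z : Set G).toFinset ⊆ ({y | y ^ orderOf z = 1} : Finset G) := fun y hy => by
    rw [Set.mem_toFinset] at hy
    simpa using orderOf_dvd_iff_pow_eq_one.mp (orderOf_dvd_of_mem_zpowers hy)
  -- a cyclic group has at most `orderOf z` solutions of `y ^ orderOf z = 1`, all of them in `⟨z⟩`
  have hzpowers := eq_of_subset_of_card_le hsub <| by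
    rw [Set.toFinset_card, ← Nat.card_eq_fintype_card, SetLike.coe_sort_coe, Nat.card_zpowers]
    exact card_pow_eq_one_le (orderOf_pos z)
  have hx : x ∈ ({y | y ^ orderOf z = 1} : Finset G) := by
    simpa using orderOf_dvd_iff_pow_eq_one.mp h
  simpa [← hzpowers] using hx

theorem card_filter_orderOf (P : ℕ → Prop) [DecidablePred P] :
    #{z : G | P (orderOf z)} = ∑ m ∈ (Fintype.card G).divisors with P m, m.totient := by
  classical
  rw [card_eq_sum_card_fiberwise (f := orderOf) (t := (Fintype.card G).divisors.filter P)]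
  · refine sum_congr rfl fun m hm => ?_
    rw [mem_filter, Nat.mem_divisors] at hm
    rw [← card_orderOf_eq_totient hm.1.1, filter_filter]
    congr 1
    exact filter_congr fun z _ => ⟨And.right, fun h => ⟨h ▸ hm.2, h⟩⟩
  · intro z hz
    simp only [coe_filter, mem_univ, true_and, Set.mem_ofPred_eq] at hz
    simpa [Nat.mem_divisors, hz] using orderOf_dvd_card

theorem card_filter_orderOf_dvd (x : G) : #{z : G | orderOf z ∣ orderOf x} = orderOf x := by
  rw [card_filter_orderOf (· ∣ orderOf x),
    Nat.divisors_filter_dvd_of_dvd Fintype.card_ne_zero orderOf_dvd_card, Nat.sum_totient]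

end IsCyclic

section PowerGraph

variable {G : Type*} [Group G] [Fintype G] [IsCyclic G]

theorem powerGraph_adj_iff_orderOf_dvd {x z : G} :
    (powerGraph G).Adj x z ↔ x ≠ z ∧ (orderOf x ∣ orderOf z ∨ orderOf z ∣ orderOf x) := by
  show x ≠ z ∧ (x ∈ zpowers z ∨ z ∈ zpowers x) ↔ _
  rw [IsCyclic.mem_zpowers_iff_orderOf_dvd, IsCyclic.mem_zpowers_iff_orderOf_dvd]

theorem powerGraph_neighborSet_ncard (x : G) :
    ((powerGraph G).neighborSet x).ncard =
      orderOf x + (∑ m ∈ (Fintype.card G).divisors with orderOf x ∣ m, m.totient)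
        - (orderOf x).totient - 1 := by
  classical
  set A : Finset G := {z | orderOf z ∣ orderOf x}
  set B : Finset G := {z | orderOf x ∣ orderOf z}
  have hN : (powerGraph G).neighborSet x = ↑((A ∪ B).erase x) := by
    ext z
    simp [powerGraph_adj_iff_orderOf_dvd, A, B, and_comm, eq_comm, or_comm]
  have hAB : #(A ∩ B) = (orderOf x).totient := by
    rw [← filter_and, ← IsCyclic.card_orderOf_eq_totient orderOf_dvd_card]
    congr 1
    exact filter_congr fun z _ =>
      ⟨fun h => Nat.dvd_antisymm h.1 h.2, fun h => ⟨h ▸ dvd_rfl, h ▸ dvd_rfl⟩⟩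
  have hxA : x ∈ A ∪ B := mem_union_left _ (by simp [A])
  have hincl_excl := card_union_add_card_inter A B
  rw [IsCyclic.card_filter_orderOf_dvd, IsCyclic.card_filter_orderOf, hAB] at hincl_excl
  rw [hN, Set.ncard_coe_finset, card_erase_of_mem hxA]
  omega

end PowerGraph

/-- Degree formula in the power graph of the cyclic group of order n. -/
theorem stmt0 (n : ℕ) [NeZero n] (x : Multiplicative (ZMod n)) (d : ℕ)
    (hd : orderOf x = d) :
    ((powerGraph (Multiplicative (ZMod n))).neighborSet x).ncard
      = d + (∑ e ∈ (n / d).divisors, Nat.totient (n / e)) - Nat.totient d - 1 := by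
  have hcard : Fintype.card (Multiplicative (ZMod n)) = n := by simp
  have hdn : d ∣ n := hcard ▸ hd ▸ orderOf_dvd_card
  rw [powerGraph_neighborSet_ncard, hd, hcard,
    Nat.sum_divisors_filter_dvd_eq_sum_divisors_div (NeZero.ne n) hdn]
end

section
/- Let n have at least three distinct prime factors p_1 < p_2 < p_3 ≤ ... . Then the power graph of C_n is cyclically separable: removing all vertices outside H_{p_1p_2}^* ∪ O_{p_3} disconnects the graph into (at least) two components each containing a cycle, namely the clique induced by the nonidentity elements of the subgroup of order p_1p_2 (of size p_1p_2 − 1 ≥ 5) and the clique induced by the elements of order p_3 (of size p_3 − 1 ≥ 4). -/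
namespace SimpleGraph

variable {V : Type*} {G : SimpleGraph V}

lemma exists_isCycle_of_adj_of_adj_of_adj {a b c : V}
    (hab : G.Adj a b) (hbc : G.Adj b c) (hca : G.Adj c a) : ∃ p : G.Walk a a, p.IsCycle :=
  ⟨.cons hab (.cons hbc (.cons hca .nil)), by
    simp [Walk.cons_isCycle_iff, hab.ne, hbc.ne, hca.ne, hab.ne.symm, hca.ne.symm]⟩

lemma inCyclicComp_of_adj_of_adj_of_adj {a b c : V}
    (hab : G.Adj a b) (hbc : G.Adj b c) (hca : G.Adj c a) : InCyclicComp G a :=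
  ⟨a, .refl a, exists_isCycle_of_adj_of_adj_of_adj hab hbc hca⟩

lemma Reachable.mem_of_adj_closed {s : Set V} (hs : ∀ ⦃x y⦄, G.Adj x y → x ∈ s → y ∈ s)
    {u v : V} (huv : G.Reachable u v) (hu : u ∈ s) : v ∈ s := by
  obtain ⟨p⟩ := huv
  induction p with
  | nil => exact hu
  | cons h _ ih => exact ih (hs h hu)

end SimpleGraph

lemma IsCyclic.exists_orderOf_eq_of_dvd {G : Type*} [Group G] [IsCyclic G] {d : ℕ}
    (hG : Nat.card G ≠ 0) (hd : d ∣ Nat.card G) : ∃ g : G, orderOf g = d := by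
  obtain ⟨g, hg⟩ := IsCyclic.exists_ofOrder_eq_natCard (α := G)
  refine ⟨g ^ (Nat.card G / d), ?_⟩
  rw [← hg] at hG hd ⊢
  exact orderOf_pow_orderOf_div hG hd

section PowerGraph

variable {G : Type*} [Group G]

/-- The paper's `H_k^*`: in `C_n` with `k ∣ n`, the nonidentity elements of the subgroup of
order `k`. -/
def puncturedTorsion (G : Type*) [Group G] (k : ℕ) : Set G :=
  {x | x ^ k = 1 ∧ x ≠ 1}

lemma mem_puncturedTorsion_orderOf {x : G} (hx : orderOf x ≠ 1) :
    x ∈ puncturedTorsion G (orderOf x) :=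
  ⟨pow_orderOf_eq_one x, fun h => hx (orderOf_eq_one_iff.mpr h)⟩

lemma mem_puncturedTorsion_of_mem_zpowers {k : ℕ} {x y : G} (hx : x ∈ puncturedTorsion G k)
    (hy : y ∈ Subgroup.zpowers x) (hy1 : y ≠ 1) : y ∈ puncturedTorsion G k :=
  ⟨orderOf_dvd_iff_pow_eq_one.mp
    ((orderOf_dvd_of_mem_zpowers hy).trans (orderOf_dvd_of_pow_eq_one hx.1)), hy1⟩

lemma disjoint_puncturedTorsion {m k : ℕ} (hmk : m.Coprime k) :
    Disjoint (puncturedTorsion G m) (puncturedTorsion G k) := by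
  refine Set.disjoint_left.mpr fun x hm hk => hm.2 (orderOf_eq_one_iff.mp ?_)
  exact Nat.dvd_one.mp (hmk ▸ Nat.dvd_gcd (orderOf_dvd_of_pow_eq_one hm.1)
    (orderOf_dvd_of_pow_eq_one hk.1))

lemma powerGraph_adj_of_mem_zpowers {x y : G} (hy : y ∈ Subgroup.zpowers x) (hxy : x ≠ y) :
    (powerGraph G).Adj x y :=
  ⟨hxy, Or.inr hy⟩

lemma not_powerGraph_adj_of_coprime {m k : ℕ} (hmk : m.Coprime k) {x y : G}
    (hx : x ∈ puncturedTorsion G m) (hy : y ∈ puncturedTorsion G k) :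
    ¬ (powerGraph G).Adj x y := by
  rintro ⟨-, hxy | hyx⟩
  · exact (disjoint_puncturedTorsion hmk).ne_of_mem hx
      (mem_puncturedTorsion_of_mem_zpowers hy hxy hx.2) rfl
  · exact (disjoint_puncturedTorsion hmk).ne_of_mem
      (mem_puncturedTorsion_of_mem_zpowers hx hyx hy.2) hy rfl

lemma powerGraph_triangle_of_four_le_orderOf {g : G} (hg : 4 ≤ orderOf g) :
    (powerGraph G).Adj g g⁻¹ ∧ (powerGraph G).Adj g⁻¹ (g ^ 2) ∧ (powerGraph G).Adj (g ^ 2) g := by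
  have hpow : ∀ j, j ≠ 0 → j < 4 → g ^ j ≠ 1 := fun j hj hj4 =>
    pow_ne_one_of_lt_orderOf hj (by omega)
  have hsq : g ^ 2 ∈ Subgroup.zpowers g := Subgroup.npow_mem_zpowers g 2
  refine ⟨powerGraph_adj_of_mem_zpowers (Subgroup.inv_mem _ (Subgroup.mem_zpowers g)) ?_,
    powerGraph_adj_of_mem_zpowers (Subgroup.zpowers_inv (g := g) ▸ hsq) ?_,
    (powerGraph_adj_of_mem_zpowers hsq ?_).symm⟩
  · rw [Ne, eq_inv_iff_mul_eq_one, ← sq]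
    exact hpow 2 (by norm_num) (by norm_num)
  · rw [Ne, inv_eq_iff_mul_eq_one, ← pow_succ']
    exact hpow 3 (by norm_num) (by norm_num)
  · rw [Ne, eq_comm, sq, mul_eq_left]
    exact hpow 1 (by norm_num) (by norm_num) ∘ (pow_one g).trans

lemma inCyclicComp_induce_powerGraph {s : Set G} {k : ℕ} (hs : puncturedTorsion G k ⊆ s)
    {g : G} (hg : g ∈ puncturedTorsion G k) (hg4 : 4 ≤ orderOf g) :
    InCyclicComp ((powerGraph G).induce s) ⟨g, hs hg⟩ := by
  have hinv : g⁻¹ ∈ s := hs <| mem_puncturedTorsion_of_mem_zpowers hg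
    (Subgroup.inv_mem _ (Subgroup.mem_zpowers g)) (inv_ne_one.mpr hg.2)
  have hsq : g ^ 2 ∈ s := hs <| mem_puncturedTorsion_of_mem_zpowers hg
    (Subgroup.npow_mem_zpowers g 2) (pow_ne_one_of_lt_orderOf two_ne_zero (by omega))
  obtain ⟨h₁, h₂, h₃⟩ := powerGraph_triangle_of_four_le_orderOf hg4
  exact SimpleGraph.inCyclicComp_of_adj_of_adj_of_adj (b := ⟨g⁻¹, hinv⟩) (c := ⟨g ^ 2, hsq⟩)
    h₁ h₂ h₃

theorem isCyclicCutset_compl_puncturedTorsion_union {g h : G}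
    (hgh : (orderOf g).Coprime (orderOf h)) (hg : 4 ≤ orderOf g) (hh : 4 ≤ orderOf h) :
    IsCyclicCutset (powerGraph G)
      (puncturedTorsion G (orderOf g) ∪ puncturedTorsion G (orderOf h))ᶜ := by
  set A := puncturedTorsion G (orderOf g) ∪ puncturedTorsion G (orderOf h)
  have hA : A ⊆ Aᶜᶜ := fun x hx => not_not_intro hx
  have hgA := mem_puncturedTorsion_orderOf (x := g) (by omega)
  have hhA := mem_puncturedTorsion_orderOf (x := h) (by omega)
  refine ⟨⟨g, hA (.inl hgA)⟩, ⟨h, hA (.inr hhA)⟩, fun hreach => ?_,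
    inCyclicComp_induce_powerGraph (Set.subset_union_left.trans hA) hgA hg,
    inCyclicComp_induce_powerGraph (Set.subset_union_right.trans hA) hhA hh⟩
  -- Walks inside `A` cannot leave `H_{orderOf g}^*`, since no edge joins it to `H_{orderOf h}^*`.
  have hclosed := hreach.mem_of_adj_closed (s := {x : ↥Aᶜᶜ | x.1 ∈ puncturedTorsion G (orderOf g)})
  refine (disjoint_puncturedTorsion hgh).ne_of_mem (hclosed ?_ hgA) hhA rfl
  rintro ⟨x, _⟩ ⟨y, hy⟩ hxy hx
  refine (not_not.mp hy).resolve_right fun hy' => ?_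
  exact not_powerGraph_adj_of_coprime hgh hx hy' hxy

end PowerGraph

/-- If n has at least three distinct prime factors then the power graph of C_n
is cyclically separable, witnessed by the complement of
H_{p₁p₂}^* ∪ O_{p₃}. -/
theorem stmt7 (n p₁ p₂ p₃ : ℕ) [NeZero n]
    (hp₁ : p₁.Prime) (hp₂ : p₂.Prime) (hp₃ : p₃.Prime)
    (h12 : p₁ < p₂) (h23 : p₂ < p₃)
    (hd₁ : p₁ ∣ n) (hd₂ : p₂ ∣ n) (hd₃ : p₃ ∣ n) :
    IsCyclicCutset (powerGraph (Multiplicative (ZMod n)))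
      (({x : Multiplicative (ZMod n) | x ^ (p₁ * p₂) = 1 ∧ x ≠ 1} ∪
        {x : Multiplicative (ZMod n) | orderOf x = p₃})ᶜ) ∧
    CyclicallySeparable (powerGraph (Multiplicative (ZMod n))) := by
  have hcard : Nat.card (Multiplicative (ZMod n)) = n := Nat.card_zmod n
  have hcop₁₂ : p₁.Coprime p₂ := (Nat.coprime_primes hp₁ hp₂).mpr h12.ne
  have hcop : (p₁ * p₂).Coprime p₃ := Nat.Coprime.mul_left
    ((Nat.coprime_primes hp₁ hp₃).mpr (h12.trans h23).ne) ((Nat.coprime_primes hp₂ hp₃).mpr h23.ne)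
  obtain ⟨z, hz⟩ := IsCyclic.exists_orderOf_eq_of_dvd (hcard ▸ NeZero.ne n)
    (hcard ▸ hcop₁₂.mul_dvd_of_dvd_of_dvd hd₁ hd₂)
  obtain ⟨w, hw⟩ := IsCyclic.exists_orderOf_eq_of_dvd (hcard ▸ NeZero.ne n) (hcard ▸ hd₃)
  have : Fact p₃.Prime := ⟨hp₃⟩
  have hO : {x : Multiplicative (ZMod n) | orderOf x = p₃} = puncturedTorsion _ p₃ :=
    Set.ext fun _ => orderOf_eq_prime_iff
  have h₁₂ : 4 ≤ p₁ * p₂ := Nat.mul_le_mul hp₁.two_le hp₂.two_le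
  have h₃ : 4 ≤ p₃ := by have := hp₁.two_le; omega
  have hcut := isCyclicCutset_compl_puncturedTorsion_union (hz ▸ hw ▸ hcop) (hz ▸ h₁₂) (hw ▸ h₃)
  rw [hz, hw] at hcut
  rw [hO]
  exact ⟨hcut, _, hcut⟩
end

section
/- For any positive integer n, the power graph of the cyclic group C_n is cyclically separable if and only if: (i) n has at least two distinct prime factors, (ii) n is not of the form p_1p_2 with primes p_1 < p_2 and p_1 ∈ {2,3}, and (iii) n ≠ 12. -/
/-!
In a finite cyclic group two distinct elements are adjacent in the power graph iff their orders
are comparable under divisibility, and there are exactly `φ d` elements of order `d ∣ n`. Hence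
the two cyclic components left by a cutset yield two families of divisors of `n`, incomparable
across, each carrying at least three elements; conversely two such families that are chains give
two cliques of size at least three, which become separate cyclic components once every other
vertex is deleted.

Such families cannot exist when the divisors of `n` form a chain (`n` a prime power), nor for
`n = pq` with `p ≤ 3` or `n = 12`, where too few elements have incomparable orders. Otherwise,
writing `n = q ^ b * m` with `q` the largest prime factor, the chains `{minFac k, k}` for
`k = q ^ b` and `k = m` work when both are at least `4`; the remaining cases `n = r q ^ b`
(`r ∈ {2, 3}`, `b ≥ 2`) and `n = 3 · 2 ^ a` (`a ≥ 3`) are handled by `{q ^ 2}, {r, r q}` and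
`{8}, {3, 6}`.
-/

open Finset SimpleGraph
open scoped Nat

section Graph

variable {V : Type*} {Γ : SimpleGraph V}

lemma exists_isCycle_of_adj {a b c : V} (hab : Γ.Adj a b) (hbc : Γ.Adj b c) (hca : Γ.Adj c a) :
    ∃ w : Γ.Walk a a, w.IsCycle :=
  ⟨.cons hab (.cons hbc (.cons hca .nil)), by
    simp [Walk.isCycle_def, hab.ne, hbc.ne, hca.ne, hab.ne.symm, hca.ne.symm]⟩

lemma InCyclicComp.exists_finset_reachable {u : V} (h : InCyclicComp Γ u) :
    ∃ s : Finset V, 3 ≤ #s ∧ ∀ x ∈ s, Γ.Reachable u x := by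
  classical
  obtain ⟨w, huw, c, hc⟩ := h
  refine ⟨c.support.tail.toFinset, ?_, fun x hx ↦
    huw.trans ⟨c.takeUntil x (List.mem_of_mem_tail (List.mem_toFinset.mp hx))⟩⟩
  rw [List.toFinset_card_of_nodup hc.support_nodup, List.length_tail, c.length_support]
  have := hc.three_le_length
  omega

lemma exists_inCyclicComp_induce_of_isClique {X : Set V} {A : Finset V} (hAX : ↑A ⊆ X)
    (hA : Γ.IsClique (A : Set V)) (hA3 : 3 ≤ #A) :
    ∃ a, ∃ ha : a ∈ A, InCyclicComp (Γ.induce X) ⟨a, hAX ha⟩ := by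
  obtain ⟨a, b, c, ha, hb, hc, hab, hac, hbc⟩ := two_lt_card_iff.mp hA3
  have adj {x y : V} (hx : x ∈ A) (hy : y ∈ A) (hxy : x ≠ y) :
      (Γ.induce X).Adj ⟨x, hAX hx⟩ ⟨y, hAX hy⟩ :=
    hA hx hy hxy
  exact ⟨a, ha, _, .refl _,
    exists_isCycle_of_adj (adj ha hb hab) (adj hb hc hbc) (adj hc ha hac.symm)⟩

theorem isCyclicCutset_compl_union [DecidableEq V] {A B : Finset V}
    (hA : Γ.IsClique (A : Set V)) (hB : Γ.IsClique (B : Set V)) (hA3 : 3 ≤ #A) (hB3 : 3 ≤ #B)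
    (hAB : Disjoint A B) (hadj : ∀ a ∈ A, ∀ b ∈ B, ¬ Γ.Adj a b) :
    IsCyclicCutset Γ (↑(A ∪ B))ᶜ := by
  obtain ⟨a, ha, hu⟩ := exists_inCyclicComp_induce_of_isClique
    (X := (↑(A ∪ B))ᶜᶜ) (by simp [Set.subset_def]; tauto) hA hA3
  obtain ⟨b, hb, hv⟩ := exists_inCyclicComp_induce_of_isClique
    (X := (↑(A ∪ B))ᶜᶜ) (by simp [Set.subset_def]; tauto) hB hB3
  refine ⟨_, _, fun ⟨p⟩ ↦ ?_, hu, hv⟩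
  obtain ⟨d, -, hdA, hdA'⟩ := p.exists_boundary_dart {x | (x : V) ∈ A} ha
    (disjoint_right.mp hAB hb)
  have hdB : (d.snd : V) ∈ B := by
    have := d.snd.2
    simp only [compl_compl, coe_union, Set.mem_union, mem_coe] at this
    exact this.resolve_left hdA'
  exact hadj _ hdA _ hdB d.adj

theorem IsCyclicCutset.exists_finset_pair {S : Set V} (h : IsCyclicCutset Γ S) :
    ∃ A B : Finset V, 3 ≤ #A ∧ 3 ≤ #B ∧ ∀ a ∈ A, ∀ b ∈ B, a ≠ b ∧ ¬ Γ.Adj a b := by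
  obtain ⟨u, v, huv, hu, hv⟩ := h
  obtain ⟨s, hs3, hs⟩ := hu.exists_finset_reachable
  obtain ⟨t, ht3, ht⟩ := hv.exists_finset_reachable
  refine ⟨s.map (.subtype _), t.map (.subtype _), by simpa, by simpa, ?_⟩
  simp only [mem_map, Function.Embedding.coe_subtype]
  rintro _ ⟨x, hx, rfl⟩ _ ⟨y, hy, rfl⟩
  refine ⟨fun hxy ↦ huv ?_, fun hxy ↦ huv ?_⟩
  · exact (hs x hx).trans (Subtype.ext hxy ▸ (ht y hy).symm)
  · exact (hs x hx).trans ((show (Γ.induce Sᶜ).Adj x y from hxy).reachable.trans (ht y hy).symm)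

end Graph

/-- `∑ d ∈ D, φ d` counts the elements of the cyclic group of order `n` whose order lies in `D`. -/
structure SeparatedDivisors (n : ℕ) (D E : Finset ℕ) : Prop where
  dvd_left : ∀ d ∈ D, d ∣ n
  dvd_right : ∀ e ∈ E, e ∣ n
  three_le_left : 3 ≤ ∑ d ∈ D, φ d
  three_le_right : 3 ≤ ∑ e ∈ E, φ e
  incompRel : ∀ d ∈ D, ∀ e ∈ E, IncompRel (· ∣ ·) d e

lemma Nat.dvd_or_dvd_of_card_primeFactors_le_one {n a b : ℕ} (hn : n ≠ 0)
    (h : #n.primeFactors ≤ 1) (ha : a ∣ n) (hb : b ∣ n) : a ∣ b ∨ b ∣ a := by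
  rcases h.eq_or_lt with h1 | h0
  · obtain ⟨p, k, hp, -, rfl⟩ := isPrimePow_iff_card_primeFactors_eq_one.mpr h1
    obtain ⟨i, -, rfl⟩ := (Nat.dvd_prime_pow hp.nat_prime).mp ha
    obtain ⟨j, -, rfl⟩ := (Nat.dvd_prime_pow hp.nat_prime).mp hb
    exact (le_total i j).imp (pow_dvd_pow p) (pow_dvd_pow p)
  · obtain rfl : n = 1 := by
      have : n.primeFactors = ∅ := Finset.card_eq_zero.mp (by omega)
      simpa [hn] using Nat.primeFactors_eq_empty.mp this
    simp_all

lemma Nat.eq_or_eq_of_dvd_mul_of_prime {p q d : ℕ} (hp : p.Prime) (hq : q.Prime)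
    (hd : d ∣ p * q) (hd1 : d ≠ 1) (hdpq : d ≠ p * q) : d = p ∨ d = q := by
  obtain ⟨y, z, hy, hz, rfl⟩ := Nat.dvd_mul.mp hd
  rcases (Nat.dvd_prime hp).mp hy with rfl | rfl <;>
    rcases (Nat.dvd_prime hq).mp hz with rfl | rfl <;> simp_all

namespace SeparatedDivisors

variable {n : ℕ} {D E : Finset ℕ}

lemma symm (h : SeparatedDivisors n D E) : SeparatedDivisors n E D :=
  ⟨h.dvd_right, h.dvd_left, h.three_le_right, h.three_le_left,
    fun e he d hd ↦ (h.incompRel d hd e he).symm⟩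

lemma nonempty_left (h : SeparatedDivisors n D E) : D.Nonempty := by
  by_contra hD
  have := h.three_le_left
  simp_all

lemma disjoint (h : SeparatedDivisors n D E) : Disjoint D E :=
  Finset.disjoint_left.mpr fun d hdD hdE ↦ (h.incompRel d hdD d hdE).1 dvd_rfl

lemma ne_one_of_mem_left (h : SeparatedDivisors n D E) {d : ℕ} (hd : d ∈ D) : d ≠ 1 := by
  obtain ⟨e, he⟩ := h.symm.nonempty_left
  rintro rfl
  exact (h.incompRel 1 hd e he).1 (one_dvd e)

lemma ne_of_mem_left (h : SeparatedDivisors n D E) {d : ℕ} (hd : d ∈ D) : d ≠ n := by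
  obtain ⟨e, he⟩ := h.symm.nonempty_left
  rintro rfl
  exact (h.incompRel d hd e he).2 (h.dvd_right e he)

lemma two_le_card_primeFactors (h : SeparatedDivisors n D E) (hn : n ≠ 0) :
    2 ≤ #n.primeFactors := by
  obtain ⟨d, hd⟩ := h.nonempty_left
  obtain ⟨e, he⟩ := h.symm.nonempty_left
  by_contra! hlt
  have hde := h.incompRel d hd e he
  exact (Nat.dvd_or_dvd_of_card_primeFactors_le_one hn (by omega) (h.dvd_left d hd)
    (h.dvd_right e he)).elim hde.1 hde.2

lemma ne_prime_mul {p q : ℕ} (h : SeparatedDivisors n D E) (hp : p.Prime) (hq : q.Prime)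
    (hp3 : p ≤ 3) : n ≠ p * q := by
  rintro rfl
  -- a family avoiding `q` can only contain `p`, and `φ p ≤ 2`
  have hsmall {F F' : Finset ℕ} (hF : SeparatedDivisors (p * q) F F') (hqF : q ∉ F) : False := by
    have hFp : F ⊆ {p} := fun d hd ↦ by
      rcases Nat.eq_or_eq_of_dvd_mul_of_prime hp hq (hF.dvd_left d hd) (hF.ne_one_of_mem_left hd)
        (hF.ne_of_mem_left hd) with rfl | rfl
      · exact mem_singleton_self d
      · exact absurd hd hqF
    have := hF.three_le_left.trans (sum_le_sum_of_subset hFp)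
    rw [sum_singleton, Nat.totient_prime hp] at this
    omega
  by_cases hqD : q ∈ D
  · exact hsmall h.symm (Finset.disjoint_left.mp h.disjoint hqD)
  · exact hsmall h hqD

-- on the proper divisors `2, 3, 4, 6` incomparability is the path `2 - 3 - 4 - 6` and `φ ≤ 2`
lemma ne_twelve (h : SeparatedDivisors n D E) : n ≠ 12 := by
  rintro rfl
  have hsub {F F' : Finset ℕ} (hF : SeparatedDivisors 12 F F') : F ⊆ {2, 3, 4, 6} := fun d hd ↦ by
    have hd12 := hF.dvd_left d hd
    have := hF.ne_one_of_mem_left hd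
    have := hF.ne_of_mem_left hd
    have := Nat.le_of_dvd (by norm_num) hd12
    interval_cases d <;> simp_all
  have key : ∀ D ∈ ({2, 3, 4, 6} : Finset ℕ).powerset, ∀ E ∈ ({2, 3, 4, 6} : Finset ℕ).powerset,
      3 ≤ ∑ d ∈ D, φ d → 3 ≤ ∑ e ∈ E, φ e → ¬ ∀ d ∈ D, ∀ e ∈ E, IncompRel (· ∣ ·) d e := by
    decide
  exact key D (mem_powerset.mpr (hsub h)) E (mem_powerset.mpr (hsub h.symm))
    h.three_le_left h.three_le_right h.incompRel

end SeparatedDivisors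

lemma three_le_sum_totient_minFac_self {a : ℕ} (ha : 4 ≤ a) : 3 ≤ ∑ d ∈ {a.minFac, a}, φ d := by
  by_cases hp : a.Prime
  · simp only [hp.minFac_eq, mem_singleton, insert_eq_of_mem, sum_singleton,
      Nat.totient_prime hp]
    omega
  · have hne : a.minFac ≠ a := fun h ↦ hp (h ▸ Nat.minFac_prime (by omega))
    rw [sum_pair hne]
    -- `φ a` is even and positive, so at least `2`
    obtain ⟨k, hk⟩ := Nat.totient_even (by omega : 2 < a)
    have := Nat.totient_pos.mpr (by omega : 0 < a)
    have := Nat.totient_pos.mpr (Nat.minFac_pos a)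
    omega

lemma incompRel_dvd_of_coprime {a b d e : ℕ} (hab : a.Coprime b) (hd : d ∣ a) (he : e ∣ b)
    (hd1 : d ≠ 1) (he1 : e ≠ 1) : IncompRel (· ∣ ·) d e :=
  ⟨fun hde ↦ hd1 (Nat.eq_one_of_dvd_coprimes hab hd (hde.trans he)),
    fun hed ↦ he1 (Nat.eq_one_of_dvd_coprimes hab (hed.trans hd) he)⟩

lemma separatedDivisors_of_coprime {n a b : ℕ} (hab : a.Coprime b) (ha : 4 ≤ a) (hb : 4 ≤ b)
    (hn : a * b ∣ n) : SeparatedDivisors n {a.minFac, a} {b.minFac, b} := by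
  have hmem {c d : ℕ} (hc : 4 ≤ c) (hd : d ∈ ({c.minFac, c} : Finset ℕ)) : d ∣ c ∧ d ≠ 1 := by
    rcases mem_insert.mp hd with rfl | hd
    · exact ⟨Nat.minFac_dvd c, (Nat.minFac_prime (by omega)).one_lt.ne'⟩
    · rw [mem_singleton.mp hd]
      exact ⟨dvd_rfl, by omega⟩
  refine ⟨fun d hd ↦ ?_, fun e he ↦ ?_, three_le_sum_totient_minFac_self ha,
    three_le_sum_totient_minFac_self hb, fun d hd e he ↦ ?_⟩
  · exact (hmem ha hd).1.trans (dvd_of_mul_right_dvd hn)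
  · exact (hmem hb he).1.trans (dvd_of_mul_left_dvd hn)
  · exact incompRel_dvd_of_coprime hab (hmem ha hd).1 (hmem hb he).1 (hmem ha hd).2 (hmem hb he).2

lemma separatedDivisors_prime_pow_prime_mul {n r s k : ℕ} (hr : r.Prime) (hs : s.Prime)
    (hrs : r ≠ s) (hk : 2 ≤ k) (hφ : 3 ≤ φ (s ^ k)) (hn : r * s ^ k ∣ n) :
    SeparatedDivisors n {s ^ k} {r, r * s} := by
  have hsr : ¬ s ∣ r := fun h ↦ hrs ((Nat.prime_dvd_prime_iff_eq hs hr).mp h).symm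
  have hrs' : ¬ r ∣ s ^ k := fun h ↦
    hrs ((Nat.prime_dvd_prime_iff_eq hr hs).mp (hr.dvd_of_dvd_pow h))
  have hsk : s ^ 2 ∣ s ^ k := pow_dvd_pow s hk
  refine ⟨?_, ?_, by simpa using hφ, ?_, ?_⟩
  · simpa using dvd_of_mul_left_dvd hn
  · simp only [mem_insert, mem_singleton, forall_eq_or_imp, forall_eq]
    exact ⟨dvd_of_mul_right_dvd hn, (mul_dvd_mul_left r (dvd_pow_self s (by omega))).trans hn⟩
  · have hne : r ≠ r * s := by nlinarith [hr.two_le, hs.two_le]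
    rw [sum_pair hne, Nat.totient_mul ((Nat.coprime_primes hr hs).mpr hrs),
      Nat.totient_prime hr, Nat.totient_prime hs]
    -- `(r - 1) * s ≥ 3` because `r ≠ s` rules out `r = s = 2`
    have := hr.two_le
    have := hs.two_le
    rcases (show r = 2 ∨ 3 ≤ r by omega) with rfl | h3
    · have : s ≠ 2 := fun h ↦ hrs h.symm
      omega
    · have := Nat.mul_le_mul (show 2 ≤ r - 1 by omega) (show 1 ≤ s - 1 by omega)
      omega
  · simp only [mem_singleton, mem_insert, forall_eq, forall_eq_or_imp]
    refine ⟨⟨fun h ↦ hsr ((dvd_pow_self s (by omega)).trans h), hrs'⟩,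
      fun h ↦ hsr ?_, fun h ↦ hrs' (dvd_of_mul_right_dvd h)⟩
    rw [sq] at hsk
    exact (Nat.mul_dvd_mul_iff_right hs.pos).mp (hsk.trans h)

lemma Nat.eight_dvd_of_forall_prime_dvd_lt_three {m : ℕ} (hm : 4 < m)
    (h : ∀ s, s.Prime → s ∣ m → s < 3) : 8 ∣ m := by
  have hm2 : m = 2 ^ m.primeFactorsList.length :=
    Nat.eq_prime_pow_of_unique_prime_dvd (by omega) fun hs hsm ↦ by
      have := h _ hs hsm
      have := hs.two_le
      omega
  have : 3 ≤ m.primeFactorsList.length := by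
    by_contra! hlt
    interval_cases hl : m.primeFactorsList.length <;> omega
  rw [hm2]
  exact dvd_trans (by norm_num) (pow_dvd_pow 2 this)

lemma Nat.exists_prime_pow_mul_of_two_le_card_primeFactors {n : ℕ} (hn : n ≠ 0)
    (h : 2 ≤ #n.primeFactors) :
    ∃ q b m, q.Prime ∧ 1 ≤ b ∧ q ^ b * m = n ∧ 2 ≤ m ∧ ∀ s, s.Prime → s ∣ m → s < q := by
  have hne : n.primeFactors.Nonempty := Finset.card_pos.mp (by omega)
  set q := n.primeFactors.max' hne
  have hq : q ∈ n.primeFactors := max'_mem _ hne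
  have hqp := Nat.prime_of_mem_primeFactors hq
  refine ⟨q, n.factorization q, n / q ^ n.factorization q, hqp,
    hqp.factorization_pos_of_dvd hn (Nat.dvd_of_mem_primeFactors hq),
    Nat.ordProj_mul_ordCompl_eq_self n q, ?_, fun s hs hsm ↦ ?_⟩
  · by_contra! hlt
    have hQm := Nat.ordProj_mul_ordCompl_eq_self n q
    interval_cases hm : n / q ^ n.factorization q
    · simp [eq_comm, hn] at hQm
    · rw [mul_one] at hQm
      rw [← hQm, Nat.primeFactors_prime_pow (Nat.pos_iff_ne_zero.mp
        (hqp.factorization_pos_of_dvd hn (Nat.dvd_of_mem_primeFactors hq))) hqp] at h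
      simp at h
  · have hsq : s ≤ q :=
      le_max' _ s (Nat.mem_primeFactors.mpr ⟨hs, hsm.trans (Nat.ordCompl_dvd n q), hn⟩)
    have : s ≠ q := by rintro rfl; exact Nat.not_dvd_ordCompl hs hn hsm
    omega

theorem exists_separatedDivisors_isChain {n : ℕ} (hn : n ≠ 0) (h1 : 2 ≤ #n.primeFactors)
    (h2 : ¬ ∃ p q : ℕ, p.Prime ∧ q.Prime ∧ p < q ∧ (p = 2 ∨ p = 3) ∧ n = p * q) (h12 : n ≠ 12) :
    ∃ D E : Finset ℕ, IsChain (· ∣ ·) (D : Set ℕ) ∧ IsChain (· ∣ ·) (E : Set ℕ) ∧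
      SeparatedDivisors n D E := by
  obtain ⟨q, b, m, hq, hb, rfl, hm2, hlt⟩ :=
    Nat.exists_prime_pow_mul_of_two_le_card_primeFactors hn h1
  have hq3 : 3 ≤ q := by
    have := hlt _ (Nat.minFac_prime (by omega)) (Nat.minFac_dvd m)
    have := (Nat.minFac_prime (show m ≠ 1 by omega)).two_le
    omega
  have hqm : ¬ q ∣ m := fun h ↦ (hlt q hq h).false
  rcases lt_or_ge m 4 with hm4 | hm4
  · have hmp : m.Prime := by interval_cases m <;> norm_num
    have hb2 : 2 ≤ b := by
      by_contra! hb1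
      obtain rfl : b = 1 := by omega
      exact h2 ⟨m, q, hmp, hq, hlt m hmp dvd_rfl, by omega, by ring⟩
    refine ⟨{q ^ 2}, {m, m * q}, by simp, by rw [coe_pair]; exact IsChain.pair (dvd_mul_right m q),
      separatedDivisors_prime_pow_prime_mul hmp hq (hlt m hmp dvd_rfl).ne le_rfl ?_ ?_⟩
    · rw [Nat.totient_prime_pow hq two_pos, show 2 - 1 = 1 from rfl, pow_one]
      have := Nat.mul_le_mul hq3 (show 2 ≤ q - 1 by omega)
      omega
    · rw [mul_comm]
      exact mul_dvd_mul_right (pow_dvd_pow q hb2) m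
  rcases lt_or_ge (q ^ b) 4 with hQ4 | hQ4
  · obtain rfl : b = 1 := by
      by_contra hb1
      have := Nat.pow_le_pow_right (by omega : 1 ≤ q) (show 2 ≤ b by omega)
      nlinarith
    obtain rfl : q = 3 := by rw [pow_one] at hQ4; omega
    have h8 : 8 ∣ m := Nat.eight_dvd_of_forall_prime_dvd_lt_three (by omega) hlt
    refine ⟨{2 ^ 3}, {3, 3 * 2}, by simp, by rw [coe_pair]; exact IsChain.pair (dvd_mul_right 3 2),
      separatedDivisors_prime_pow_prime_mul Nat.prime_three Nat.prime_two (by norm_num)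
        (by norm_num) (by decide) (by simpa using mul_dvd_mul_left 3 h8)⟩
  · exact ⟨_, _, by rw [coe_pair]; exact IsChain.pair (Nat.minFac_dvd _),
      by rw [coe_pair]; exact IsChain.pair (Nat.minFac_dvd _),
      separatedDivisors_of_coprime ((hq.coprime_iff_not_dvd.mpr hqm).pow_left b) hQ4 hm4 dvd_rfl⟩

section CyclicGroup

variable {G : Type*} [Group G] [Fintype G] [IsCyclic G]

theorem mem_zpowers_iff_orderOf_dvd {x y : G} :
    x ∈ Subgroup.zpowers y ↔ orderOf x ∣ orderOf y := by
  classical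
  refine ⟨orderOf_dvd_of_mem_zpowers, fun h ↦ ?_⟩
  -- `zpowers y` already fills the at most `orderOf y` solutions of `g ^ orderOf y = 1`
  have hsub : (Subgroup.zpowers y : Set G).toFinset ⊆ ({g | g ^ orderOf y = 1} : Finset G) := by
    intro g hg
    simpa using orderOf_dvd_iff_pow_eq_one.mp (orderOf_dvd_of_mem_zpowers (by simpa using hg))
  have heq := eq_of_subset_of_card_le hsub <| by
    rw [Set.toFinset_card, ← Nat.card_eq_fintype_card]
    exact (IsCyclic.card_pow_eq_one_le (orderOf_pos y)).trans (Nat.card_zpowers y).ge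
  have hx : x ∈ ({g | g ^ orderOf y = 1} : Finset G) := by
    simpa using orderOf_dvd_iff_pow_eq_one.mp h
  simpa [← heq] using hx

theorem powerGraph_adj_iff {x y : G} :
    (powerGraph G).Adj x y ↔ x ≠ y ∧ (orderOf x ∣ orderOf y ∨ orderOf y ∣ orderOf x) := by
  simp only [powerGraph, mem_zpowers_iff_orderOf_dvd]

theorem sum_totient_eq_card_orderOf_mem [DecidableEq G] {D : Finset ℕ}
    (hD : ∀ d ∈ D, d ∣ Fintype.card G) : ∑ d ∈ D, φ d = #{g : G | orderOf g ∈ D} := by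
  rw [card_eq_sum_card_fiberwise (f := orderOf) (s := {g | orderOf g ∈ D}) (t := D)
    fun g hg ↦ by simpa using hg]
  refine sum_congr rfl fun d hd ↦ ?_
  rw [← IsCyclic.card_orderOf_eq_totient (hD d hd), filter_filter]
  congr 1
  ext g
  simp only [mem_filter, mem_univ, true_and]
  exact ⟨fun hg ↦ ⟨hg ▸ hd, hg⟩, And.right⟩

theorem CyclicallySeparable.exists_separatedDivisors (h : CyclicallySeparable (powerGraph G)) :
    ∃ D E : Finset ℕ, SeparatedDivisors (Fintype.card G) D E := by
  classical
  obtain ⟨S, hS⟩ := h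
  obtain ⟨A, B, hA3, hB3, hAB⟩ := hS.exists_finset_pair
  have hle {C : Finset G} (hC : 3 ≤ #C) : 3 ≤ ∑ d ∈ C.image orderOf, φ d := by
    rw [sum_totient_eq_card_orderOf_mem (G := G) (by simp [orderOf_dvd_card])]
    exact hC.trans (card_le_card fun g hg ↦ by simpa using ⟨g, hg, rfl⟩)
  refine ⟨A.image orderOf, B.image orderOf, ⟨by simp [orderOf_dvd_card], by simp [orderOf_dvd_card],
    hle hA3, hle hB3, ?_⟩⟩
  simp only [mem_image]
  rintro _ ⟨a, ha, rfl⟩ _ ⟨b, hb, rfl⟩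
  obtain ⟨hne, hnadj⟩ := hAB a ha b hb
  exact ⟨fun hab ↦ hnadj (powerGraph_adj_iff.mpr ⟨hne, .inl hab⟩),
    fun hba ↦ hnadj (powerGraph_adj_iff.mpr ⟨hne, .inr hba⟩)⟩

theorem cyclicallySeparable_of_separatedDivisors {D E : Finset ℕ}
    (hD : IsChain (· ∣ ·) (D : Set ℕ)) (hE : IsChain (· ∣ ·) (E : Set ℕ))
    (h : SeparatedDivisors (Fintype.card G) D E) : CyclicallySeparable (powerGraph G) := by
  classical
  have hclique {C : Finset ℕ} (hC : IsChain (· ∣ ·) (C : Set ℕ)) :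
      (powerGraph G).IsClique ({g | orderOf g ∈ C} : Finset G) := by
    intro x hx y hy hxy
    simp only [coe_filter, mem_univ, true_and, Set.mem_ofPred_eq] at hx hy
    refine powerGraph_adj_iff.mpr ⟨hxy, ?_⟩
    by_cases hord : orderOf x = orderOf y
    · exact .inl hord.dvd
    · exact hC hx hy hord
  refine ⟨_, isCyclicCutset_compl_union (hclique hD) (hclique hE)
    ((sum_totient_eq_card_orderOf_mem h.dvd_left) ▸ h.three_le_left)
    ((sum_totient_eq_card_orderOf_mem h.dvd_right) ▸ h.three_le_right) ?_ ?_⟩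
  · rw [Finset.disjoint_left]
    intro g hgD hgE
    simp only [mem_filter, mem_univ, true_and] at hgD hgE
    exact (h.incompRel _ hgD _ hgE).1 dvd_rfl
  · intro x hx y hy hadj
    simp only [mem_filter, mem_univ, true_and] at hx hy
    have := h.incompRel _ hx _ hy
    exact (powerGraph_adj_iff.mp hadj).2.elim this.1 this.2

end CyclicGroup

/-- Characterization of cyclic separability of power graphs of cyclic groups. -/
theorem stmt8 (n : ℕ) [NeZero n] :
    CyclicallySeparable (powerGraph (Multiplicative (ZMod n))) ↔
      (2 ≤ n.primeFactors.card ∧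
       (¬ ∃ p q : ℕ, p.Prime ∧ q.Prime ∧ p < q ∧ (p = 2 ∨ p = 3) ∧ n = p * q) ∧
       n ≠ 12) := by
  have hcard : Fintype.card (Multiplicative (ZMod n)) = n := by simp
  constructor
  · intro h
    obtain ⟨D, E, hDE⟩ := h.exists_separatedDivisors
    rw [hcard] at hDE
    refine ⟨hDE.two_le_card_primeFactors (NeZero.ne n), ?_, hDE.ne_twelve⟩
    rintro ⟨p, q, hp, hq, -, hp3, rfl⟩
    exact hDE.ne_prime_mul hp hq (by omega) rfl
  · rintro ⟨h1, h2, h12⟩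
    obtain ⟨D, E, hD, hE, hDE⟩ := exists_separatedDivisors_isChain (NeZero.ne n) h1 h2 h12
    exact cyclicallySeparable_of_separatedDivisors hD hE (by rwa [hcard])
end

section
/- Let n = p_1p_2 with primes p_1 < p_2 and p_1 ∈ {2,3}. Then in the power graph of C_n, after deleting the identity and all generators, the remaining graph is the disjoint union of two cliques of sizes p_1 − 1 and p_2 − 1, and since p_1 − 1 ≤ 2 the power graph of C_n has no cyclic vertex cutset. -/
/-!
The identity and the generators of a cyclic group are adjacent to every vertex of its power
graph, so a cyclic vertex cutset must contain them all. When the group has order `pq`, the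
surviving vertices have order `p` or `q`; adjacent vertices of prime order have equal order,
so each component of what is left consists of elements of one prime order. Elements of order
`p` number `φ(p) = p - 1 ≤ 2`, too few to carry a cycle, whereas two surviving elements of
order `q` are adjacent. Hence at most one component can contain a cycle.
-/

namespace SimpleGraph

variable {V : Type*} {Γ : SimpleGraph V}

lemma Reachable.eq_of_forall_adj {α : Type*} {f : V → α}
    (hf : ∀ ⦃x y⦄, Γ.Adj x y → f x = f y) {u v : V} (h : Γ.Reachable u v) :
    f u = f v := by
  obtain ⟨p⟩ := h
  induction p with
  | nil => rfl
  | cons hadj _ ih => exact (hf hadj).trans ih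

lemma Walk.IsCycle.three_le_card_support_tail [DecidableEq V] {v : V} {c : Γ.Walk v v}
    (hc : c.IsCycle) : 3 ≤ c.support.tail.toFinset.card := by
  rw [List.toFinset_card_of_nodup hc.support_nodup, List.length_tail, Walk.length_support]
  exact hc.three_le_length

end SimpleGraph

open SimpleGraph

lemma InCyclicComp.three_le_ncard_reachable {V : Type*} [Finite V] {Γ : SimpleGraph V} {v : V}
    (h : InCyclicComp Γ v) : 3 ≤ {w | Γ.Reachable v w}.ncard := by
  classical
  obtain ⟨w, hvw, c, hc⟩ := h
  have hsub : (c.support.tail.toFinset : Set V) ⊆ {w | Γ.Reachable v w} := fun x hx =>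
    hvw.trans ⟨c.takeUntil x (List.mem_of_mem_tail (List.mem_toFinset.1 hx))⟩
  calc 3 ≤ c.support.tail.toFinset.card := hc.three_le_card_support_tail
    _ = (c.support.tail.toFinset : Set V).ncard := (Set.ncard_coe_finset _).symm
    _ ≤ _ := Set.ncard_le_ncard hsub

lemma IsCyclicCutset.mem_of_isUniversal {V : Type*} {Γ : SimpleGraph V} {S : Set V}
    (hS : IsCyclicCutset Γ S) {t : V} (ht : Γ.IsUniversal t) : t ∈ S := by
  obtain ⟨u, v, huv, -, -⟩ := hS
  by_contra htS
  have hind : (Γ.induce Sᶜ).IsUniversal ⟨t, htS⟩ := fun w hw => ht (Subtype.coe_ne_coe.2 hw)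
  exact huv ((Reachable.of_isUniversal u hind).symm.trans (Reachable.of_isUniversal v hind))

section Group

variable {G : Type*} [Group G]

lemma mem_zpowers_of_orderOf_eq [Finite G] [IsCyclic G] {x y : G} (h : orderOf x = orderOf y) :
    x ∈ Subgroup.zpowers y := by
  classical
  cases nonempty_fintype G
  set d := orderOf y
  let roots : Finset G := {b | b ^ d = 1}
  have hsub : (Subgroup.zpowers y : Set G) ⊆ roots := fun z hz => by
    simpa [roots] using orderOf_dvd_iff_pow_eq_one.1 (orderOf_dvd_of_mem_zpowers hz)
  have hcard : (roots : Set G).ncard ≤ (Subgroup.zpowers y : Set G).ncard := by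
    rw [Set.ncard_coe_finset, ← Nat.card_coe_set_eq, SetLike.coe_sort_coe, Nat.card_zpowers]
    exact IsCyclic.card_pow_eq_one_le (orderOf_pos y)
  rw [← SetLike.mem_coe, Set.eq_of_subset_of_ncard_le hsub hcard]
  simp [roots, d, ← h, pow_orderOf_eq_one]

lemma ncard_setOf_orderOf_eq [Finite G] [IsCyclic G] {d : ℕ} (hd : d ∣ Nat.card G) :
    {x : G | orderOf x = d}.ncard = d.totient := by
  classical
  cases nonempty_fintype G
  rw [Set.ncard_eq_toFinset_card', Set.toFinset_ofPred]
  exact IsCyclic.card_orderOf_eq_totient (Nat.card_eq_fintype_card (α := G) ▸ hd)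

lemma powerGraph_isUniversal_one : (powerGraph G).IsUniversal 1 :=
  fun _ hz => ⟨hz, Or.inl (Subgroup.one_mem _)⟩

lemma powerGraph_isUniversal_of_orderOf_eq_card [Finite G] {t : G}
    (ht : orderOf t = Nat.card G) : (powerGraph G).IsUniversal t := by
  have htop : Subgroup.zpowers t = ⊤ := by
    rw [← Subgroup.card_eq_iff_eq_top, Nat.card_zpowers, ht]
  exact fun z hz => ⟨hz, Or.inr (htop ▸ Subgroup.mem_top z)⟩

lemma powerGraph_adj_of_orderOf_eq [Finite G] [IsCyclic G] {x y : G} (hne : x ≠ y)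
    (h : orderOf x = orderOf y) : (powerGraph G).Adj x y :=
  ⟨hne, Or.inl (mem_zpowers_of_orderOf_eq h)⟩

lemma powerGraph_isClique_setOf_orderOf_eq [Finite G] [IsCyclic G] (d : ℕ) :
    (powerGraph G).IsClique {x : G | orderOf x = d} :=
  fun _ hx _ hy hne => powerGraph_adj_of_orderOf_eq hne (hx.trans hy.symm)

lemma orderOf_eq_of_powerGraph_adj {x y : G} (hx : (orderOf x).Prime) (hy : (orderOf y).Prime)
    (h : (powerGraph G).Adj x y) : orderOf x = orderOf y := by
  rcases h.2 with h | h
  · exact (Nat.prime_dvd_prime_iff_eq hx hy).1 (orderOf_dvd_of_mem_zpowers h)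
  · exact ((Nat.prime_dvd_prime_iff_eq hy hx).1 (orderOf_dvd_of_mem_zpowers h)).symm

variable {p q : ℕ} (hp : p.Prime) (hq : q.Prime) (hG : Nat.card G = p * q)
include hp hq hG

lemma orderOf_eq_one_or_eq_or_eq_or_eq_mul (x : G) :
    orderOf x = 1 ∨ orderOf x = p ∨ orderOf x = q ∨ orderOf x = p * q := by
  obtain ⟨a, b, ha, hb, hab⟩ := Nat.dvd_mul.1 (hG ▸ orderOf_dvd_natCard x)
  rcases hp.eq_one_or_self_of_dvd a ha with rfl | rfl <;>
    rcases hq.eq_one_or_self_of_dvd b hb with rfl | rfl <;> simp [← hab]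

lemma compl_setOf_orderOf_eq_card_or_eq_one :
    {x : G | orderOf x = p * q ∨ x = 1}ᶜ = {x | orderOf x = p} ∪ {x | orderOf x = q} := by
  have hpq : p < p * q := lt_mul_of_one_lt_right hp.pos hq.one_lt
  have hqp : q < p * q := lt_mul_of_one_lt_left hq.pos hp.one_lt
  ext x
  simp only [Set.mem_compl_iff, Set.mem_ofPred_eq, Set.mem_union]
  rw [← orderOf_eq_one_iff]
  rcases orderOf_eq_one_or_eq_or_eq_or_eq_mul hp hq hG x with h | h | h | h <;> rw [h] <;>
    grind [hp.one_lt, hq.one_lt]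

lemma not_cyclicallySeparable_powerGraph [Finite G] [IsCyclic G] (hp3 : p ≤ 3) :
    ¬ CyclicallySeparable (powerGraph G) := by
  rintro ⟨S, hS⟩
  obtain ⟨u, v, huv, hu, hv⟩ := id hS
  set Γ := (powerGraph G).induce Sᶜ
  have horder : ∀ z : ↥Sᶜ, orderOf (z : G) = p ∨ orderOf (z : G) = q := by
    intro z
    have hz : (z : G) ∈ {x : G | orderOf x = p * q ∨ x = 1}ᶜ := by
      rintro (h | h)
      · exact z.2 (hS.mem_of_isUniversal
          (powerGraph_isUniversal_of_orderOf_eq_card (h.trans hG.symm)))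
      · exact z.2 (h ▸ hS.mem_of_isUniversal powerGraph_isUniversal_one)
    rwa [compl_setOf_orderOf_eq_card_or_eq_one hp hq hG] at hz
  have hprime (z : ↥Sᶜ) : (orderOf (z : G)).Prime := (horder z).elim (· ▸ hp) (· ▸ hq)
  have hconst {a b : ↥Sᶜ} (h : Γ.Reachable a b) :
      orderOf (a : G) = orderOf (b : G) :=
    h.eq_of_forall_adj (f := fun z : ↥Sᶜ => orderOf (z : G))
      fun x y hxy => orderOf_eq_of_powerGraph_adj (hprime x) (hprime y) hxy
  have hne_p (z : ↥Sᶜ) (hz : InCyclicComp Γ z) : orderOf (z : G) ≠ p := by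
    intro hzp
    have hle : {w | Γ.Reachable z w}.ncard ≤ {x : G | orderOf x = p}.ncard :=
      Set.ncard_le_ncard_of_injOn Subtype.val (fun w hw => (hconst hw).symm.trans hzp)
        Subtype.val_injective.injOn
    rw [ncard_setOf_orderOf_eq ⟨q, hG⟩, Nat.totient_prime hp] at hle
    have := hz.three_le_ncard_reachable
    omega
  have huq := (horder u).resolve_left (hne_p u hu)
  have hvq := (horder v).resolve_left (hne_p v hv)
  rcases eq_or_ne u v with rfl | hne
  · exact huv Reachable.rfl
  · have hadj : Γ.Adj u v :=
      powerGraph_adj_of_orderOf_eq (Subtype.coe_ne_coe.2 hne) (huq.trans hvq.symm)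
    exact huv hadj.reachable

end Group

/-- For n = p₁p₂ with p₁ ∈ {2,3}, deleting the identity and the generators
leaves two cliques of sizes p₁ - 1 and p₂ - 1 with no edges between them, and
the power graph has no cyclic vertex cutset. -/
theorem stmt9 (p₁ p₂ n : ℕ) (hp₁ : p₁.Prime) (hp₂ : p₂.Prime) (hlt : p₁ < p₂)
    (hsmall : p₁ = 2 ∨ p₁ = 3) (hn : n = p₁ * p₂) [NeZero n] :
    ({x : Multiplicative (ZMod n) | orderOf x = n ∨ x = 1}ᶜ
        = {x : Multiplicative (ZMod n) | orderOf x = p₁} ∪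
          {x : Multiplicative (ZMod n) | orderOf x = p₂}) ∧
    (powerGraph (Multiplicative (ZMod n))).IsClique
      {x : Multiplicative (ZMod n) | orderOf x = p₁} ∧
    (powerGraph (Multiplicative (ZMod n))).IsClique
      {x : Multiplicative (ZMod n) | orderOf x = p₂} ∧
    {x : Multiplicative (ZMod n) | orderOf x = p₁}.ncard = p₁ - 1 ∧
    {x : Multiplicative (ZMod n) | orderOf x = p₂}.ncard = p₂ - 1 ∧
    (∀ a b : Multiplicative (ZMod n), orderOf a = p₁ → orderOf b = p₂ →
      ¬ (powerGraph (Multiplicative (ZMod n))).Adj a b) ∧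
    ¬ CyclicallySeparable (powerGraph (Multiplicative (ZMod n))) := by
  subst hn
  have hcard : Nat.card (Multiplicative (ZMod (p₁ * p₂))) = p₁ * p₂ := Nat.card_zmod _
  refine ⟨compl_setOf_orderOf_eq_card_or_eq_one hp₁ hp₂ hcard,
    powerGraph_isClique_setOf_orderOf_eq p₁, powerGraph_isClique_setOf_orderOf_eq p₂, ?_, ?_,
    fun a b ha hb hab => by
      have := orderOf_eq_of_powerGraph_adj (by rwa [ha]) (by rwa [hb]) hab
      omega,
    not_cyclicallySeparable_powerGraph hp₁ hp₂ hcard (by omega)⟩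
  · rw [ncard_setOf_orderOf_eq ⟨p₂, hcard⟩, Nat.totient_prime hp₁]
  · rw [ncard_setOf_orderOf_eq ⟨p₁, hcard.trans (mul_comm _ _)⟩, Nat.totient_prime hp₂]
end

section
/- If G is a dihedral group D_{2n} (n ≥ 3) or a dicyclic group Q_{4n} (n ≥ 2), then the vertex connectivity and cyclic vertex connectivity of the power graph of G are never equal: κ(P(D_{2n})) = 1 while cκ(P(D_{2n})) > 1, and κ(P(Q_{4n})) = 2 while cκ(P(Q_{4n})) > 2. -/
/-!
In a power graph the identity is adjacent to every other vertex, so only sets containing `1`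
can separate. In `D_{2n}`, deleting `1` isolates every reflection `sr i` (its only proper power
is `1`), while the rotations stay joined to the generator `r 1`; isolated vertices lie on no
cycle, so `{1}` separates but no set of size at most one is a cyclic cutset. In `Q_{4n}`, every
`xa i` squares to `a n`, so after deleting `1` everything is still joined through `a n` and a
generator `a (±1)` of the rotations. Deleting `{1, a n}` splits off the pairs
`{xa i, xa (i + n)}`, which are too small to carry a cycle, and the three vertices
`1, a 1, a (-1)` cannot all lie in a set of size two.
-/

open Subgroup SimpleGraph

namespace SimpleGraph

variable {V : Type*} {Γ : SimpleGraph V}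

def IsAdjClosed (Γ : SimpleGraph V) (A : Set V) : Prop :=
  ∀ ⦃x y : V⦄, x ∈ A → Γ.Adj x y → y ∈ A

lemma isAdjClosed_singleton {u : V} (hu : ∀ w, ¬ Γ.Adj u w) : Γ.IsAdjClosed {u} := by
  rintro x y rfl hxy
  exact (hu y hxy).elim

lemma Walk.support_subset_of_isAdjClosed {A : Set V} (hA : Γ.IsAdjClosed A) {u v : V}
    (p : Γ.Walk u v) (hu : u ∈ A) : ∀ x ∈ p.support, x ∈ A := by
  induction p with
  | nil => simpa using hu
  | cons h p ih => simpa [hu] using ih (hA hu h)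

lemma Reachable.mem_of_isAdjClosed {A : Set V} (hA : Γ.IsAdjClosed A) {u v : V}
    (h : Γ.Reachable u v) (hu : u ∈ A) : v ∈ A :=
  h.elim fun p => p.support_subset_of_isAdjClosed hA hu v p.end_mem_support

lemma Walk.IsCycle.two_lt_encard {u : V} {c : Γ.Walk u u} (hc : c.IsCycle) {A : Set V}
    (hA : ∀ x ∈ c.support, x ∈ A) : 2 < A.encard := by
  classical
  have hcard : c.support.tail.toFinset.card = c.length := by
    rw [List.toFinset_card_of_nodup hc.support_nodup, List.length_tail, Walk.length_support]
    simp
  have hsub : (c.support.tail.toFinset : Set V) ⊆ A :=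
    fun x hx => hA x (List.mem_of_mem_tail (List.mem_toFinset.mp hx))
  calc (2 : ℕ∞) < c.length := by exact_mod_cast hc.three_le_length
    _ = (c.support.tail.toFinset : Set V).encard := by
      rw [Set.encard_coe_eq_coe_finsetCard, hcard]
    _ ≤ A.encard := Set.encard_le_encard hsub

lemma not_inCyclicComp_of_isAdjClosed {A : Set V} (hA : Γ.IsAdjClosed A) (hA2 : A.encard ≤ 2)
    {v : V} (hv : v ∈ A) : ¬ InCyclicComp Γ v := by
  rintro ⟨w, hvw, c, hc⟩
  have hw : w ∈ A := hvw.mem_of_isAdjClosed hA hv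
  exact (hc.two_lt_encard (c.support_subset_of_isAdjClosed hA hw)).not_ge hA2

lemma preconnected_of_forall_reachable (g : V) (h : ∀ u, Γ.Reachable u g) : Γ.Preconnected :=
  fun u v => (h u).trans (h v).symm

lemma not_isCyclicCutset_of_forall_reachable {S : Set V} (g : ↥Sᶜ)
    (h : ∀ u, InCyclicComp (Γ.induce Sᶜ) u → (Γ.induce Sᶜ).Reachable u g) :
    ¬ IsCyclicCutset Γ S := by
  rintro ⟨u, v, huv, hu, hv⟩
  exact huv ((h u hu).trans (h v hv).symm)

lemma not_isCyclicCutset_of_preconnected {S : Set V} (h : (Γ.induce Sᶜ).Preconnected) :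
    ¬ IsCyclicCutset Γ S := by
  rintro ⟨u, v, huv, -, -⟩
  exact huv (h u v)

lemma vertexConn_eq_of_minimal_separator {k : ℕ}
    (hsep : ∃ S : Set V, S.ncard = k ∧ ¬ (Γ.induce Sᶜ).Connected)
    (hconn : ∀ S : Set V, S.ncard < k → (Γ.induce Sᶜ).Preconnected ∧ Sᶜ.Nontrivial) :
    vertexConn Γ = k := by
  obtain ⟨S, hSk, hS⟩ := hsep
  refine le_antisymm (Nat.sInf_le ⟨S, hSk, Or.inl hS⟩) (le_csInf ⟨k, S, hSk, Or.inl hS⟩ ?_)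
  rintro j ⟨T, rfl, hT⟩
  by_contra! hlt
  obtain ⟨hpre, hnt⟩ := hconn T hlt
  have := hnt.nonempty.to_subtype
  exact hT.elim (· ⟨hpre⟩) hnt.not_subsingleton

lemma lt_cyclicVertexConn {k : ℕ} (h : ∀ S, IsCyclicCutset Γ S → k < S.ncard) :
    (k : ℕ∞) < cyclicVertexConn Γ :=
  (ENat.add_one_le_iff (ENat.natCast_ne_top k)).mp <| le_sInf <| by
    rintro _ ⟨S, hS, rfl⟩
    exact_mod_cast h S hS

end SimpleGraph

lemma Set.nontrivial_compl_of_ncard_add_two_le {α : Type*} [Finite α] {S : Set α}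
    (h : S.ncard + 2 ≤ Nat.card α) : Sᶜ.Nontrivial := by
  rw [← Set.one_lt_ncard_iff_nontrivial, Set.ncard_compl]
  omega

lemma ZMod.natCast_ne_natCast_of_lt {j k m : ℕ} (hj : j < m) (hk : k < m) (h : j ≠ k) :
    (j : ZMod m) ≠ k := by
  rwa [Ne, ZMod.natCast_eq_natCast_iff', Nat.mod_eq_of_lt hj, Nat.mod_eq_of_lt hk]

section PowerGraph

variable {G : Type*} [Group G]

lemma powerGraph_adj_of_mem_zpowers_s19 {x y : G} (hne : x ≠ y) (h : x ∈ zpowers y) :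
    (powerGraph G).Adj x y :=
  ⟨hne, Or.inl h⟩

lemma powerGraph_induce_reachable_of_mem_zpowers {S : Set G} {x y : G} (hx : x ∈ Sᶜ)
    (hy : y ∈ Sᶜ) (h : x ∈ zpowers y) :
    ((powerGraph G).induce Sᶜ).Reachable ⟨x, hx⟩ ⟨y, hy⟩ := by
  by_cases hxy : x = y
  · subst hxy
    rfl
  · exact Adj.reachable (powerGraph_adj_of_mem_zpowers_s19 hxy h)

lemma powerGraph_induce_preconnected_of_one_notMem {S : Set G} (h1 : (1 : G) ∈ Sᶜ) :
    ((powerGraph G).induce Sᶜ).Preconnected :=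
  preconnected_of_forall_reachable ⟨1, h1⟩ fun u =>
    (powerGraph_induce_reachable_of_mem_zpowers h1 u.2 (one_mem _)).symm

end PowerGraph

namespace DihedralGroup

variable {n : ℕ}

lemma sr_notMem_zpowers_r (i j : ZMod n) : sr i ∉ zpowers (r j) := by
  intro h
  obtain ⟨k, hk⟩ := mem_zpowers_iff.mp h
  rw [r_zpow] at hk
  cases hk

lemma mem_zpowers_sr {i : ZMod n} {y : DihedralGroup n} (h : y ∈ zpowers (sr i)) :
    y = 1 ∨ y = sr i := by
  obtain ⟨k, rfl⟩ := mem_zpowers_iff.mp h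
  rw [← zpow_mod_orderOf, orderOf_sr]
  rcases Int.emod_two_eq_zero_or_one k with hk | hk <;> simp [hk]

lemma r_mem_zpowers_r_one (j : ZMod n) : r j ∈ zpowers (r 1) :=
  mem_zpowers_iff.mpr ⟨j.cast, by simp⟩

lemma eq_one_of_powerGraph_adj_sr {i : ZMod n} {y : DihedralGroup n}
    (h : (powerGraph (DihedralGroup n)).Adj (sr i) y) : y = 1 := by
  obtain ⟨hne, hy | hy⟩ := h
  · cases y with
    | r j => exact absurd hy (sr_notMem_zpowers_r i j)
    | sr j =>
      rcases mem_zpowers_sr hy with h | h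
      · cases h
      · exact absurd h hne
  · exact (mem_zpowers_sr hy).resolve_right (Ne.symm hne)

lemma isAdjClosed_sr {S : Set (DihedralGroup n)} (h1 : 1 ∈ S) {i : ZMod n} (hi : sr i ∈ Sᶜ) :
    ((powerGraph (DihedralGroup n)).induce Sᶜ).IsAdjClosed {⟨sr i, hi⟩} :=
  isAdjClosed_singleton fun y hy =>
    y.2 (by rwa [show (y : DihedralGroup n) = 1 from eq_one_of_powerGraph_adj_sr hy])

lemma not_isCyclicCutset_powerGraph {S : Set (DihedralGroup n)} (hS : 1 ∉ S ∨ r 1 ∉ S) :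
    ¬ IsCyclicCutset (powerGraph (DihedralGroup n)) S := by
  by_cases h1 : (1 : DihedralGroup n) ∈ S
  · have hr1 : r 1 ∈ Sᶜ := hS.resolve_left (not_not_intro h1)
    refine not_isCyclicCutset_of_forall_reachable ⟨r 1, hr1⟩ fun ⟨x, hx⟩ hcyc => ?_
    cases x with
    | r j => exact powerGraph_induce_reachable_of_mem_zpowers hx hr1 (r_mem_zpowers_r_one j)
    | sr i =>
      exact absurd hcyc (not_inCyclicComp_of_isAdjClosed (isAdjClosed_sr h1 hx) (by simp) rfl)
  · exact not_isCyclicCutset_of_preconnected (powerGraph_induce_preconnected_of_one_notMem h1)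

theorem vertexConn_powerGraph (hn : 1 < n) : vertexConn (powerGraph (DihedralGroup n)) = 1 := by
  have : NeZero n := ⟨by omega⟩
  have : Fact (1 < n) := ⟨hn⟩
  refine vertexConn_eq_of_minimal_separator ⟨{1}, Set.ncard_singleton 1, fun hconn => ?_⟩ ?_
  · have hsr (i : ZMod n) : sr i ∈ ({1}ᶜ : Set (DihedralGroup n)) :=
      Set.mem_compl_singleton_iff.mpr (show sr i ≠ r 0 from nofun)
    have h := (hconn.preconnected ⟨sr 0, hsr 0⟩ ⟨sr 1, hsr 1⟩).mem_of_isAdjClosed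
      (isAdjClosed_sr (Set.mem_singleton 1) (hsr 0)) rfl
    simp at h
  · intro S hS
    rw [Nat.lt_one_iff, Set.ncard_eq_zero] at hS
    subst hS
    exact ⟨powerGraph_induce_preconnected_of_one_notMem (by simp),
      Set.nontrivial_compl_of_ncard_add_two_le (by rw [Set.ncard_empty, nat_card]; omega)⟩

theorem one_lt_cyclicVertexConn_powerGraph (hn : 1 < n) :
    1 < cyclicVertexConn (powerGraph (DihedralGroup n)) := by
  have : NeZero n := ⟨by omega⟩
  have : Fact (1 < n) := ⟨hn⟩
  refine mod_cast lt_cyclicVertexConn fun S hS => ?_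
  by_contra! hS1
  refine not_isCyclicCutset_powerGraph (not_and_or.mp fun ⟨h1, hr⟩ => ?_) hS
  exact one_ne_zero (r.inj ((Set.ncard_le_one_iff).mp hS1 hr h1))

end DihedralGroup

namespace QuaternionGroup

variable {n : ℕ}

lemma natCast_add_self : (n : ZMod (2 * n)) + n = 0 := by
  rw [← two_mul]
  exact_mod_cast ZMod.natCast_self (2 * n)

lemma a_zpow (i : ZMod (2 * n)) (k : ℤ) : a i ^ k = a (i * (k : ZMod (2 * n))) := by
  induction k using Int.induction_on with
  | zero => simp
  | succ k ih => rw [zpow_add_one, ih, a_mul_a]; push_cast; ring_nf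
  | pred k ih =>
    rw [zpow_sub_one, ih]
    show a (i * ((-k : ℤ) : ZMod (2 * n))) * a (-i) = _
    rw [a_mul_a]; push_cast; ring_nf

lemma xa_notMem_zpowers_a (i j : ZMod (2 * n)) : xa i ∉ zpowers (a j) := by
  intro h
  obtain ⟨k, hk⟩ := mem_zpowers_iff.mp h
  rw [a_zpow] at hk
  cases hk

lemma a_mem_zpowers_a_one (j : ZMod (2 * n)) : a j ∈ zpowers (a 1) :=
  mem_zpowers_iff.mpr ⟨j.cast, by simp [a_zpow]⟩

lemma a_mem_zpowers_a_neg_one (j : ZMod (2 * n)) : a j ∈ zpowers (a (-1)) := by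
  rw [show a (-1 : ZMod (2 * n)) = (a 1)⁻¹ from rfl, zpowers_inv]
  exact a_mem_zpowers_a_one j

lemma a_n_mem_zpowers_xa (i : ZMod (2 * n)) : a (n : ZMod (2 * n)) ∈ zpowers (xa i) :=
  mem_zpowers_iff.mpr ⟨2, by rw [zpow_two, ← sq, xa_sq]⟩

lemma mem_zpowers_xa {i : ZMod (2 * n)} {y : QuaternionGroup n} (h : y ∈ zpowers (xa i)) :
    y = 1 ∨ y = xa i ∨ y = a (n : ZMod (2 * n)) ∨ y = xa (i + (n : ZMod (2 * n))) := by
  obtain ⟨k, rfl⟩ := mem_zpowers_iff.mp h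
  rw [zpow_eq_zpow_emod' k (xa_pow_four i)]
  have h0 : 0 ≤ k % (4 : ℕ) := by omega
  have h4 : k % (4 : ℕ) < 4 := by omega
  interval_cases k % (4 : ℕ)
  · simp
  · simp
  · simp [xa_sq]
  · right; right; right
    rw [show (3 : ℤ) = 2 + 1 from rfl, zpow_add_one, zpow_two, ← sq, xa_sq, a_mul_xa,
      sub_eq_add_neg, neg_eq_of_add_eq_zero_left natCast_add_self]

lemma powerGraph_adj_xa {i : ZMod (2 * n)} {y : QuaternionGroup n}
    (h : (powerGraph (QuaternionGroup n)).Adj (xa i) y) :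
    y = 1 ∨ y = a (n : ZMod (2 * n)) ∨ y = xa (i + (n : ZMod (2 * n))) := by
  obtain ⟨hne, hy | hy⟩ := h
  · cases y with
    | a j => exact absurd hy (xa_notMem_zpowers_a i j)
    | xa j =>
      obtain h | h | h | h := mem_zpowers_xa hy
      · cases h
      · exact absurd h hne
      · cases h
      · rw [xa.injEq] at h
        rw [h, add_assoc, natCast_add_self, add_zero]
        exact Or.inr (Or.inr rfl)
  · obtain h | h | h | h := mem_zpowers_xa hy
    · exact Or.inl h
    · exact absurd h.symm hne
    · exact Or.inr (Or.inl h)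
    · exact Or.inr (Or.inr h)

lemma isAdjClosed_xa_pair {S : Set (QuaternionGroup n)} (h1 : 1 ∈ S)
    (hn : a (n : ZMod (2 * n)) ∈ S) (i : ZMod (2 * n)) :
    ((powerGraph (QuaternionGroup n)).induce Sᶜ).IsAdjClosed
      (Subtype.val ⁻¹' {xa i, xa (i + (n : ZMod (2 * n)))} : Set ↥Sᶜ) := by
  have hnext {j : ZMod (2 * n)} (y : ↥Sᶜ) (hy : (powerGraph _).Adj (xa j) y) :
      (y : QuaternionGroup n) = xa (j + (n : ZMod (2 * n))) := by
    obtain h | h | h := powerGraph_adj_xa hy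
    · exact absurd (h ▸ h1) y.2
    · exact absurd (h ▸ hn) y.2
    · exact h
  rintro ⟨x, _⟩ y (rfl | rfl) hxy
  · exact Or.inr (hnext y hxy)
  · left
    rw [hnext y hxy, add_assoc, natCast_add_self, add_zero]

lemma powerGraph_induce_preconnected {S : Set (QuaternionGroup n)} {g : QuaternionGroup n}
    (hg : ∀ j, a j ∈ zpowers g) (hgS : g ∈ Sᶜ) (hn : a (n : ZMod (2 * n)) ∈ Sᶜ) :
    ((powerGraph (QuaternionGroup n)).induce Sᶜ).Preconnected := by
  refine preconnected_of_forall_reachable ⟨g, hgS⟩ fun ⟨x, hx⟩ => ?_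
  cases x with
  | a j => exact powerGraph_induce_reachable_of_mem_zpowers hx hgS (hg j)
  | xa i =>
    exact (powerGraph_induce_reachable_of_mem_zpowers hn hx (a_n_mem_zpowers_xa i)).symm.trans
      (powerGraph_induce_reachable_of_mem_zpowers hn hgS (hg n))

lemma not_isCyclicCutset_powerGraph {S : Set (QuaternionGroup n)}
    (hS : 1 ∉ S ∨ a 1 ∉ S ∨ a (-1) ∉ S) :
    ¬ IsCyclicCutset (powerGraph (QuaternionGroup n)) S := by
  by_cases h1 : (1 : QuaternionGroup n) ∈ S
  swap
  · exact not_isCyclicCutset_of_preconnected (powerGraph_induce_preconnected_of_one_notMem h1)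
  obtain ⟨g, hg, hgS⟩ : ∃ g, (∀ j, a j ∈ zpowers g) ∧ g ∈ Sᶜ := by
    rcases hS.resolve_left (not_not_intro h1) with h | h
    exacts [⟨_, a_mem_zpowers_a_one, h⟩, ⟨_, a_mem_zpowers_a_neg_one, h⟩]
  by_cases hn : a (n : ZMod (2 * n)) ∈ S
  · refine not_isCyclicCutset_of_forall_reachable ⟨g, hgS⟩ fun ⟨x, hx⟩ hcyc => ?_
    cases x with
    | a j => exact powerGraph_induce_reachable_of_mem_zpowers hx hgS (hg j)
    | xa i =>
      have hA2 :
          (Subtype.val ⁻¹' {xa i, xa (i + (n : ZMod (2 * n)))} : Set ↥Sᶜ).encard ≤ 2 :=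
        (Set.encard_preimage_val_le_encard_right _ _).trans
          ((Set.encard_insert_le _ _).trans (by norm_num))
      exact absurd hcyc
        (not_inCyclicComp_of_isAdjClosed (isAdjClosed_xa_pair h1 hn i) hA2 (Or.inl rfl))
  · exact not_isCyclicCutset_of_preconnected (powerGraph_induce_preconnected hg hgS hn)

theorem vertexConn_powerGraph (hn : 2 ≤ n) : vertexConn (powerGraph (QuaternionGroup n)) = 2 := by
  have : NeZero n := ⟨by omega⟩
  have : Fact (1 < 2 * n) := ⟨by omega⟩
  have ha1 : a 1 ≠ (1 : QuaternionGroup n) := fun h => one_ne_zero (a.inj h)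
  have han : a (n : ZMod (2 * n)) ≠ 1 := fun h => ZMod.natCast_ne_natCast_of_lt
    (show n < 2 * n by omega) (show 0 < 2 * n by omega) (by omega) (by simpa using a.inj h)
  have ha1n : a 1 ≠ a (n : ZMod (2 * n)) := fun h => ZMod.natCast_ne_natCast_of_lt
    (show 1 < 2 * n by omega) (show n < 2 * n by omega) (by omega) (by simpa using a.inj h)
  refine vertexConn_eq_of_minimal_separator
    ⟨{1, a n}, Set.ncard_pair han.symm, fun hconn => ?_⟩ ?_
  · have hxa : xa 0 ∈ ({1, a n} : Set (QuaternionGroup n))ᶜ := by simp [← a_zero]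
    have ha : a 1 ∈ ({1, a n} : Set (QuaternionGroup n))ᶜ := by simp [ha1, ha1n]
    have h := (hconn.preconnected ⟨xa 0, hxa⟩ ⟨a 1, ha⟩).mem_of_isAdjClosed
      (isAdjClosed_xa_pair (by simp) (by simp) 0) (Or.inl rfl)
    simp at h
  · intro S hS
    refine ⟨?_, Set.nontrivial_compl_of_ncard_add_two_le
      (by rw [Nat.card_eq_fintype_card, card]; omega)⟩
    by_cases h1 : (1 : QuaternionGroup n) ∈ S
    · have hS1 (x : QuaternionGroup n) (hx : x ∈ S) : x = 1 :=
        (Set.ncard_le_one_iff).mp (by omega) hx h1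
      exact powerGraph_induce_preconnected a_mem_zpowers_a_one (fun h => ha1 (hS1 _ h))
        (fun h => han (hS1 _ h))
    · exact powerGraph_induce_preconnected_of_one_notMem h1

theorem two_lt_cyclicVertexConn_powerGraph (hn : 2 ≤ n) :
    2 < cyclicVertexConn (powerGraph (QuaternionGroup n)) := by
  have : NeZero n := ⟨by omega⟩
  have : Fact (1 < 2 * n) := ⟨by omega⟩
  have : Fact (2 < 2 * n) := ⟨by omega⟩
  have ha1 : a 1 ≠ (1 : QuaternionGroup n) := fun h => one_ne_zero (a.inj h)
  refine mod_cast lt_cyclicVertexConn fun S hS => ?_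
  by_contra! hS2
  refine not_isCyclicCutset_powerGraph ?_ hS
  by_contra! h
  have h3 : ({1, a 1, a (-1)} : Set (QuaternionGroup n)).ncard = 3 :=
    Set.ncard_eq_three.mpr ⟨_, _, _, ha1.symm, fun h => ha1 (inv_eq_one.mp h.symm),
      fun h => ZMod.neg_one_ne_one (a.inj h).symm, rfl⟩
  have := Set.ncard_le_ncard (Set.insert_subset h.1 (Set.insert_subset h.2.1
    (Set.singleton_subset_iff.mpr h.2.2)))
  omega

end QuaternionGroup

/-- For dihedral and dicyclic groups, vertex connectivity and cyclic vertex
connectivity of the power graph are never equal. -/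
theorem stmt19 (n m : ℕ) (hn : 3 ≤ n) (hm : 2 ≤ m) :
    vertexConn (powerGraph (DihedralGroup n)) = 1 ∧
    1 < cyclicVertexConn (powerGraph (DihedralGroup n)) ∧
    ((vertexConn (powerGraph (DihedralGroup n)) : ℕ∞)
      ≠ cyclicVertexConn (powerGraph (DihedralGroup n))) ∧
    vertexConn (powerGraph (QuaternionGroup m)) = 2 ∧
    2 < cyclicVertexConn (powerGraph (QuaternionGroup m)) ∧
    ((vertexConn (powerGraph (QuaternionGroup m)) : ℕ∞)
      ≠ cyclicVertexConn (powerGraph (QuaternionGroup m))) := by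
  have hD := DihedralGroup.vertexConn_powerGraph (by omega : 1 < n)
  have hDc := DihedralGroup.one_lt_cyclicVertexConn_powerGraph (by omega : 1 < n)
  have hQ := QuaternionGroup.vertexConn_powerGraph hm
  have hQc := QuaternionGroup.two_lt_cyclicVertexConn_powerGraph hm
  refine ⟨hD, hDc, ?_, hQ, hQc, ?_⟩
  · rw [hD, Nat.cast_one]
    exact hDc.ne
  · rw [hQ, Nat.cast_ofNat]
    exact hQc.ne
end
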